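/- Let F be a field whose characteristic does not divide k (k ≥ 1). If M is a non-zero m^k×n^k matrix over F and A is an m×n matrix over F such that M = ⊗^k A, then R^Σ_{m×n}(M) has rank one. -/

import Mathlib

/- Each `R^{(j)}` sends `⊗^k A` to the same rank-one matrix `vec A · vec (⊗^{k-1} A)ᵀ`, because the
product defining an entry of `⊗^k A` can be split at any position `j`. Hence `R^Σ(⊗^k A)` is `k`
times that matrix, which is non-zero as soon as `k ≠ 0` in `F` and `A ≠ 0`. -/

open Matrix Kronecker

/-- `vec A` is the vector of entries of the matrix `A`, indexed by pairs. -/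
def vec {F : Type*} [Field F] {α β : Type*} (A : Matrix α β F) : α × β → F :=
  fun p => A p.1 p.2

/-- The rearrangement operator `R_{m×n}`:
`R M ((i,j),(k,l)) = M ((i,k),(j,l))`. -/
def R {F : Type*} [Field F] {m n : ℕ}
    (M : Matrix (Fin m × Fin m) (Fin n × Fin n) F) :
    Matrix (Fin m × Fin n) (Fin m × Fin n) F :=
  fun p q => M (p.1, q.1) (p.2, q.2)

/-- The `j`-th rearrangement operator `R^{(j)}_{m×n}` on `m^k × n^k` matrices
(here with `k` replaced by `k+1` so that `k ≥ 1` automatically): the entry at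
row `(a,b)` and column `(r,c)` is the entry of `M` at the tuples obtained from
`r` and `c` by inserting `a` resp. `b` at position `j`. -/
def Rj {F : Type*} [Field F] {m n k : ℕ} (j : Fin (k + 1))
    (M : Matrix (Fin (k + 1) → Fin m) (Fin (k + 1) → Fin n) F) :
    Matrix (Fin m × Fin n) ((Fin k → Fin m) × (Fin k → Fin n)) F :=
  fun p q => M (j.insertNth p.1 q.1) (j.insertNth p.2 q.2)

/-- `R^Σ_{m×n} = Σ_j R^{(j)}_{m×n}`. -/
def RSigma {F : Type*} [Field F] {m n k : ℕ}
    (M : Matrix (Fin (k + 1) → Fin m) (Fin (k + 1) → Fin n) F) :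
    Matrix (Fin m × Fin n) ((Fin k → Fin m) × (Fin k → Fin n)) F :=
  ∑ j : Fin (k + 1), Rj j M

/-- The `k`-th Kronecker power of an `m×n` matrix, indexed by tuples. -/
def kpow {F : Type*} [Field F] {m n : ℕ} (A : Matrix (Fin m) (Fin n) F) (k : ℕ) :
    Matrix (Fin k → Fin m) (Fin k → Fin n) F :=
  fun r c => ∏ i, A (r i) (c i)

/-- The `k`-fold Kronecker product of a family of `m×n` matrices,
indexed by tuples. -/
def kprodFam {F : Type*} [Field F] {m n k : ℕ}
    (A : Fin k → Matrix (Fin m) (Fin n) F) :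
    Matrix (Fin k → Fin m) (Fin k → Fin n) F :=
  fun r c => ∏ i, A i (r i) (c i)

namespace Matrix

theorem vecMulVec_ne_zero' {α ι κ : Type*} [MulZeroClass α] [NoZeroDivisors α] {u : ι → α}
    {v : κ → α} (hu : u ≠ 0) (hv : v ≠ 0) : vecMulVec u v ≠ 0 := by
  obtain ⟨i, hi⟩ := Function.ne_iff.mp hu
  obtain ⟨j, hj⟩ := Function.ne_iff.mp hv
  exact fun h => mul_ne_zero hi hj congr($h i j)

variable {K ι κ : Type*} [Field K] [Fintype κ]

theorem rank_ne_zero_of_ne_zero {A : Matrix ι κ K} (hA : A ≠ 0) : A.rank ≠ 0 := by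
  rw [rank, Ne, Submodule.finrank_eq_zero, LinearMap.range_eq_bot]
  contrapose! hA
  classical
  ext i j
  simpa using congrFun (LinearMap.congr_fun hA (Pi.single j 1)) i

theorem rank_vecMulVec_eq_one {u : ι → K} {v : κ → K} (hu : u ≠ 0) (hv : v ≠ 0) :
    (vecMulVec u v).rank = 1 :=
  le_antisymm (rank_vecMulVec_le u v)
    (Nat.one_le_iff_ne_zero.mpr (rank_ne_zero_of_ne_zero (vecMulVec_ne_zero' hu hv)))

end Matrix

section KroneckerPower

variable {F : Type*} [Field F] {m n k : ℕ}

theorem vec_ne_zero {α β : Type*} {A : Matrix α β F} (hA : A ≠ 0) : _root_.vec A ≠ 0 :=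
  fun h => hA <| Matrix.ext fun i j => congrFun h (i, j)

theorem kpow_zero_left : kpow (0 : Matrix (Fin m) (Fin n) F) (k + 1) = 0 := by
  ext r c
  simp [kpow]

theorem vec_kpow_ne_zero {A : Matrix (Fin m) (Fin n) F} (hA : A ≠ 0) :
    _root_.vec (kpow A k) ≠ 0 := by
  obtain ⟨a, b, hab⟩ : ∃ a b, A a b ≠ 0 := by simpa [← Matrix.ext_iff] using hA
  refine Function.ne_iff.mpr ⟨(fun _ => a, fun _ => b), ?_⟩
  simpa [_root_.vec, kpow] using pow_ne_zero k hab

theorem Rj_kpow (j : Fin (k + 1)) (A : Matrix (Fin m) (Fin n) F) :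
    Rj j (kpow A (k + 1)) = vecMulVec (_root_.vec A) (_root_.vec (kpow A k)) := by
  ext p q
  simp [Rj, kpow, _root_.vec, vecMulVec_apply, Fin.prod_univ_succAbove _ j]

theorem RSigma_kpow (A : Matrix (Fin m) (Fin n) F) :
    RSigma (kpow A (k + 1)) =
      vecMulVec (((k + 1 : ℕ) : F) • _root_.vec A) (_root_.vec (kpow A k)) := by
  simp [RSigma, Rj_kpow, Matrix.smul_vecMulVec, ← Nat.cast_smul_eq_nsmul F]

end KroneckerPower

/-- If the characteristic of `F` does not divide `k` and the
non-zero matrix `M` is a `k`-th Kronecker power, then `R^Σ(M)` has rank one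
(here the order `k ≥ 1` of the paper is represented as `k + 1`). -/
theorem stmt_12 {F : Type*} [Field F] {m n k : ℕ}
    (hchar : ((k + 1 : ℕ) : F) ≠ 0)
    (M : Matrix (Fin (k + 1) → Fin m) (Fin (k + 1) → Fin n) F) (hM : M ≠ 0)
    (A : Matrix (Fin m) (Fin n) F) (h : M = kpow A (k + 1)) :
    (RSigma M).rank = 1 := by
  subst h
  have hA : A ≠ 0 := by
    rintro rfl
    exact hM kpow_zero_left
  rw [RSigma_kpow]
  exact Matrix.rank_vecMulVec_eq_one (smul_ne_zero hchar (vec_ne_zero hA)) (vec_kpow_ne_zero hA)
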